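/- arXiv:1205.1607 — 2 statements merged into one kernel-verified Lean document; each statement's English description precedes it below -/
import Mathlib

section
/- Let V(n,k) be the set of configurations reachable from the all-filled configuration without exceeding n simultaneous zeros and containing exactly k zeros, and let ℓ̃(n,k) be the maximal distance of a zero from the right boundary over V(n,k). Then ℓ̃(n,k) is nondecreasing in k for 0 ≤ k ≤ n, and ℓ̃(n,1) = ℓ̃(n−1,n−1) + 1 for n ≥ 1. -/
/-- One legal East move on the half line `(-∞,-1]` with a frozen vacancy at the origin `0`:
configurations are encoded by the finite set of empty sites, a flip at `x ≤ -1` is legal iff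
`x+1` is empty (the neighbour of `-1` being the frozen vacancy), and the resulting
configuration must have at most `n` empty sites. -/
def EastStep (n : ℕ) (s s' : Finset ℤ) : Prop :=
  (∃ x : ℤ, x ≤ -1 ∧ (x = -1 ∨ (x + 1) ∈ s) ∧
      ((x ∉ s ∧ s' = insert x s) ∨ (x ∈ s ∧ s' = s.erase x))) ∧ s'.card ≤ n

/-- Reachability from the fully occupied configuration without ever exceeding `n`
simultaneous empty sites. -/
def EastReach (n : ℕ) (s : Finset ℤ) : Prop :=
  Relation.ReflTransGen (EastStep n) ∅ s

/-- `V(n,k)`: configurations reachable without exceeding `n` simultaneous zeros and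
containing exactly `k` zeros. -/
def Vnk (n k : ℕ) (s : Finset ℤ) : Prop :=
  EastReach n s ∧ s.card = k

/-- `ℓ̃(n,k)`: the maximal distance from the origin of a zero over all configurations in
`V(n,k)` (with the convention `sup ∅ = 0`). -/
noncomputable def ellT (n k : ℕ) : ℕ :=
  sSup {m : ℕ | ∃ s : Finset ℤ, Vnk n k s ∧ -(m : ℤ) ∈ s}

/-!
Restricting a legal path to the zeros in a window `(c, b)` with `b ≤ 0`, shifted so that `b`
becomes the frozen origin, gives a legal path again; together with reversibility this yields all
bounds. Read backwards from a single zero at `z`, a path removes `z` only when `z + 1` is empty,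
and until then the zeros to the right of `z` use at most `n - 1` of the budget: hence
`ℓ̃(n,1) ≤ ℓ̃(n-1,n-1) + 1`. Conversely, a zero placed just beyond the deepest zero `-L` of a
configuration of `V(n-1,n-1)`, `L = ℓ̃(n-1,n-1)`, is never touched while the path to that
configuration is undone. Monotonicity in `k` holds because a zero can always be added to the left
of the leftmost one.
-/

open Finset Relation

namespace EastStep

variable {n : ℕ} {s t : Finset ℤ}

theorem symm (h : EastStep n s t) (hs : s.card ≤ n) : EastStep n t s := by
  obtain ⟨⟨x, hx, hleg, hflip⟩, -⟩ := h
  rcases hflip with ⟨hxs, rfl⟩ | ⟨hxs, rfl⟩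
  · refine ⟨⟨x, hx, hleg.imp_right (mem_insert_of_mem ·), Or.inr ⟨mem_insert_self _ _, ?_⟩⟩, hs⟩
    rw [erase_insert hxs]
  · refine ⟨⟨x, hx, hleg.imp_right fun h => mem_erase.mpr ⟨by omega, h⟩,
      Or.inl ⟨notMem_erase _ _, ?_⟩⟩, hs⟩
    rw [insert_erase hxs]

theorem insert_of_notMem {x₀ : ℤ} (h : EastStep n s t) (hs : x₀ ∉ s) (ht : x₀ ∉ t) :
    EastStep (n + 1) (insert x₀ s) (insert x₀ t) := by
  obtain ⟨⟨x, hx, hleg, hflip⟩, hcard⟩ := h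
  refine ⟨⟨x, hx, hleg.imp_right (mem_insert_of_mem ·), ?_⟩,
    (card_insert_le _ _).trans (by omega)⟩
  rcases hflip with ⟨hxs, rfl⟩ | ⟨hxs, rfl⟩
  · have hx₀ : x₀ ≠ x := fun h => ht (h ▸ mem_insert_self _ _)
    refine Or.inl ⟨?_, insert_comm _ _ _⟩
    rw [mem_insert]; tauto
  · have hx₀ : x₀ ≠ x := fun h => hs (h ▸ hxs)
    exact Or.inr ⟨mem_insert_of_mem hxs, (erase_insert_of_ne hx₀).symm⟩

end EastStep

theorem card_le_of_reflTransGen_eastStep {n : ℕ} {s t : Finset ℤ} (h : ReflTransGen (EastStep n) s t)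
    (hs : s.card ≤ n) : t.card ≤ n := by
  induction h with
  | refl => exact hs
  | tail _ step _ => exact step.2

theorem reflTransGen_eastStep_symm {n : ℕ} {s t : Finset ℤ}
    (h : ReflTransGen (EastStep n) s t) (hs : s.card ≤ n) : ReflTransGen (EastStep n) t s := by
  induction h with
  | refl => exact .refl
  | tail hsu step ih => exact .head (step.symm (card_le_of_reflTransGen_eastStep hsu hs)) ih

namespace EastReach

variable {n : ℕ} {s : Finset ℤ}

theorem card_le (h : EastReach n s) : s.card ≤ n :=
  card_le_of_reflTransGen_eastStep h (by simp)

theorem le_neg_one (h : EastReach n s) {y : ℤ} (hy : y ∈ s) : y ≤ -1 := by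
  induction h generalizing y with
  | refl => simp at hy
  | tail _ step ih =>
    obtain ⟨⟨x, hx, -, hflip⟩, -⟩ := step
    rcases hflip with ⟨-, rfl⟩ | ⟨-, rfl⟩
    · rcases mem_insert.mp hy with rfl | hy
      exacts [hx, ih hy]
    · exact ih (mem_of_mem_erase hy)

theorem mono {n' : ℕ} (hn : n ≤ n') (h : EastReach n s) : EastReach n' s := by
  induction h with
  | refl => exact .refl
  | tail _ step ih => exact ih.tail ⟨step.1, step.2.trans hn⟩

theorem exists_insert (h : EastReach n s) (hs : s.card < n) :
    ∃ x ∉ s, EastReach n (insert x s) := by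
  set m := (insert 0 s).min' (insert_nonempty _ _)
  have hm_le : ∀ y ∈ s, m ≤ y := fun y hy => min'_le _ _ (mem_insert_of_mem hy)
  have hm_mem : m = 0 ∨ m ∈ s := mem_insert.mp (min'_mem _ _)
  have hm_nonpos : m ≤ 0 := min'_le _ _ (mem_insert_self _ _)
  have hx : m - 1 ∉ s := fun hx => by have := hm_le _ hx; omega
  refine ⟨m - 1, hx, h.tail ⟨⟨m - 1, by omega, ?_, Or.inl ⟨hx, rfl⟩⟩, ?_⟩⟩
  · rcases hm_mem with h0 | hms
    · left; omega
    · right; simpa using hms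
  · rw [card_insert_of_notMem hx]; omega

end EastReach

def Finset.restrictShift (s : Finset ℤ) (b c : ℤ) : Finset ℤ :=
  (s.filter fun y => c < y ∧ y < b).image (· - b)

theorem Finset.mem_restrictShift {s : Finset ℤ} {b c y : ℤ} :
    y ∈ s.restrictShift b c ↔ y + b ∈ s ∧ c < y + b ∧ y < 0 := by
  simp only [restrictShift, mem_image, mem_filter]
  constructor
  · rintro ⟨x, ⟨hx, hcx, hxb⟩, rfl⟩
    exact ⟨by simpa using hx, by omega, by omega⟩
  · rintro ⟨hy, hcy, hy0⟩
    exact ⟨y + b, ⟨hy, hcy, by omega⟩, by ring⟩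

theorem Finset.card_restrictShift_le (s : Finset ℤ) (b c : ℤ) :
    (s.restrictShift b c).card ≤ s.card :=
  card_image_le.trans (card_filter_le _ _)

@[simp]
theorem Finset.empty_restrictShift (b c : ℤ) : (∅ : Finset ℤ).restrictShift b c = ∅ := by
  simp [restrictShift]

theorem Finset.restrictShift_insert {s : Finset ℤ} {b c x : ℤ} :
    (insert x s).restrictShift b c =
      if c < x ∧ x < b then insert (x - b) (s.restrictShift b c) else s.restrictShift b c := by
  unfold restrictShift
  rw [filter_insert]
  split_ifs <;> simp only [image_insert]

theorem Finset.restrictShift_erase (s : Finset ℤ) (b c x : ℤ) :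
    (s.erase x).restrictShift b c = (s.restrictShift b c).erase (x - b) := by
  rw [restrictShift, filter_erase, image_erase (sub_left_injective (b := b))]
  rfl

/-- A flip inside the window is seen in the shifted window as a flip whose facilitating
neighbour is either inside the window or the image of `b`, i.e. the frozen origin. -/
theorem EastStep.restrictShift {n m : ℕ} {b c : ℤ} (hb : b ≤ 0) {s t : Finset ℤ}
    (h : EastStep n s t) (hm : (t.restrictShift b c).card ≤ m) :
    s.restrictShift b c = t.restrictShift b c ∨
      EastStep m (s.restrictShift b c) (t.restrictShift b c) := by
  obtain ⟨⟨x, hx, hleg, hflip⟩, -⟩ := h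
  have hmem : x - b ∈ s.restrictShift b c ↔ x ∈ s ∧ c < x ∧ x < b := by
    rw [mem_restrictShift, sub_add_cancel, sub_neg]
  by_cases hxw : c < x ∧ x < b
  · right
    refine ⟨⟨x - b, by omega, ?_, ?_⟩, hm⟩
    · by_cases hxb : x + 1 = b
      · left; omega
      · rcases hleg with hx1 | hx1
        · left; omega
        · right
          rw [mem_restrictShift, show x - b + 1 + b = x + 1 by ring]
          exact ⟨hx1, by omega, by omega⟩
    · rcases hflip with ⟨hxs, rfl⟩ | ⟨hxs, rfl⟩
      · exact Or.inl ⟨fun h => hxs (hmem.mp h).1, by rw [restrictShift_insert, if_pos hxw]⟩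
      · exact Or.inr ⟨hmem.mpr ⟨hxs, hxw⟩, restrictShift_erase _ _ _ _⟩
  · left
    rcases hflip with ⟨-, rfl⟩ | ⟨-, rfl⟩
    · rw [restrictShift_insert, if_neg hxw]
    · rw [restrictShift_erase, erase_eq_of_notMem fun h => hxw (hmem.mp h).2]

theorem EastReach.restrictShift {n : ℕ} {b : ℤ} (hb : b ≤ 0) (c : ℤ) {s : Finset ℤ}
    (h : EastReach n s) : EastReach n (s.restrictShift b c) := by
  induction h with
  | refl => rw [empty_restrictShift]; exact .refl
  | tail _ step ih =>
    rcases step.restrictShift hb ((card_restrictShift_le _ _ _).trans step.2) with heq | hstep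
    exacts [heq ▸ ih, ih.tail hstep]

theorem exists_reach_mem_of_reflTransGen_empty {n : ℕ} {z : ℤ} (hz : z ≤ -2) {t : Finset ℤ}
    (h : ReflTransGen (EastStep (n + 1)) t ∅) (hzt : z ∈ t)
    (habove : EastReach n (t.restrictShift 0 z)) : ∃ w, EastReach n w ∧ z + 1 ∈ w := by
  induction h using Relation.ReflTransGen.head_induction_on with
  | refl => simp at hzt
  | @head t u step _ ih =>
    by_cases hzu : z ∈ u
    · have hsub : u.restrictShift 0 z ⊆ u.erase z := fun y hy => by
        obtain ⟨hyu, hzy, -⟩ := mem_restrictShift.mp hy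
        rw [add_zero] at hyu hzy
        exact mem_erase.mpr ⟨by omega, hyu⟩
      have hcard : (u.restrictShift 0 z).card ≤ n := by
        have := card_le_card hsub
        rw [card_erase_of_mem hzu] at this
        have := step.2
        omega
      rcases step.restrictShift le_rfl hcard with heq | hstep
      exacts [ih hzu (heq ▸ habove), ih hzu (habove.tail hstep)]
    · obtain ⟨⟨x, -, hleg, hflip⟩, -⟩ := step
      have hxz : x = z := by
        rcases hflip with ⟨-, rfl⟩ | ⟨-, rfl⟩
        · exact absurd (mem_insert_of_mem hzt) hzu
        · by_contra hxz
          exact hzu (mem_erase.mpr ⟨Ne.symm hxz, hzt⟩)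
      subst hxz
      have hz1 : x + 1 ∈ t := hleg.resolve_left (by omega)
      exact ⟨_, habove, mem_restrictShift.mpr ⟨by simpa using hz1, by omega, by omega⟩⟩

namespace EastReach

variable {n : ℕ} {s : Finset ℤ}

theorem exists_reach_mem_of_singleton {z : ℤ} (hz : z ≤ -2) (h : EastReach (n + 1) {z}) :
    ∃ w, EastReach n w ∧ z + 1 ∈ w := by
  have hempty : ({z} : Finset ℤ).restrictShift 0 z = ∅ := by
    ext y
    simp only [mem_restrictShift, add_zero, mem_singleton, notMem_empty, iff_false]
    omega
  exact exists_reach_mem_of_reflTransGen_empty hz (reflTransGen_eastStep_symm h (by simp))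
    (mem_singleton_self z) (hempty ▸ .refl)

theorem of_insert_of_forall_lt {a : ℤ} (h : EastReach n (insert a s)) (has : ∀ x ∈ s, a < x) :
    EastReach n s := by
  have hwindow : (insert a s).restrictShift 0 a = s := by
    ext y
    simp only [mem_restrictShift, add_zero, mem_insert]
    constructor
    · rintro ⟨rfl | hy, hay, -⟩
      exacts [absurd hay (lt_irrefl _), hy]
    · intro hy
      exact ⟨Or.inr hy, has y hy, by have := h.le_neg_one (mem_insert_of_mem hy); omega⟩
  exact hwindow ▸ h.restrictShift le_rfl a

theorem singleton_sub_of_insert {a b : ℤ} (h : EastReach n (insert a s))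
    (has : ∀ x ∈ s, a < x) (hb : b ∈ s) (hbs : ∀ x ∈ s, b ≤ x) : EastReach n {a - b} := by
  have hwindow : (insert a s).restrictShift b (a - 1) = {a - b} := by
    ext y
    simp only [mem_restrictShift, mem_insert, mem_singleton]
    constructor
    · rintro ⟨rfl | hy, -, hy0⟩
      · ring
      · have := hbs _ hy
        omega
    · rintro rfl
      exact ⟨Or.inl (by ring), by omega, by have := has b hb; omega⟩
  have hb0 : b ≤ 0 := (h.le_neg_one (mem_insert_of_mem hb)).trans (by norm_num)
  exact hwindow ▸ h.restrictShift hb0 (a - 1)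

/-- The depth of the leftmost zero `a` is at most the depth of the next zero `b` plus that of
the lone zero at `a - b`. -/
theorem neg_le_card_mul {D : ℕ} (hD : ∀ z, EastReach n {z} → -z ≤ D) (s : Finset ℤ)
    (hs : EastReach n s) : ∀ y ∈ s, -y ≤ s.card * D := by
  induction s using Finset.induction_on_min with
  | empty => simp
  | insert a s has ih =>
    have hs' := hs.of_insert_of_forall_lt has
    have hgap : -a ≤ s.card * D + D := by
      rcases s.eq_empty_or_nonempty with rfl | hne
      · simpa using hD a (by simpa using hs)
      · have hb := min'_mem s hne
        have h1 := hD _ (hs.singleton_sub_of_insert has hb fun x hx => min'_le s x hx)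
        have h2 := ih hs' _ hb
        linarith
    rw [card_insert_of_notMem fun h => lt_irrefl a (has a h)]
    push_cast
    intro y hy
    rcases mem_insert.mp hy with rfl | hy
    · linarith
    · have := ih hs' y hy
      have : (0 : ℤ) ≤ D := by positivity
      linarith

theorem exists_bound (n : ℕ) : ∃ B : ℕ, ∀ s, EastReach n s → ∀ y ∈ s, -y ≤ B := by
  induction n with
  | zero =>
    refine ⟨0, fun s hs y hy => ?_⟩
    simp [card_eq_zero.mp (Nat.le_zero.mp hs.card_le)] at hy
  | succ n ih =>
    obtain ⟨B, hB⟩ := ih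
    have hsingle : ∀ z, EastReach (n + 1) {z} → -z ≤ (B + 1 : ℕ) := by
      intro z hz
      have hz1 := hz.le_neg_one (mem_singleton_self z)
      push_cast
      rcases eq_or_lt_of_le hz1 with rfl | hz2
      · omega
      · obtain ⟨w, hw, hzw⟩ := hz.exists_reach_mem_of_singleton (by omega)
        have := hB w hw _ hzw
        omega
    refine ⟨(n + 1) * (B + 1), fun s hs y hy => (neg_le_card_mul hsingle s hs y hy).trans ?_⟩
    push_cast
    exact mul_le_mul_of_nonneg_right (by exact_mod_cast hs.card_le) (by positivity)

theorem reflTransGen_singleton_insert {x₀ : ℤ} (hx₀ : ∀ t, EastReach n t → x₀ ∉ t)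
    (h : EastReach n s) : ReflTransGen (EastStep (n + 1)) {x₀} (insert x₀ s) := by
  induction h with
  | refl => rw [insert_empty]
  | tail ht step ih => exact ih.tail (step.insert_of_notMem (hx₀ _ ht) (hx₀ _ (ht.tail step)))

end EastReach

theorem bddAbove_ellT_set (n k : ℕ) :
    BddAbove {m : ℕ | ∃ s : Finset ℤ, Vnk n k s ∧ -(m : ℤ) ∈ s} := by
  obtain ⟨B, hB⟩ := EastReach.exists_bound n
  exact ⟨B, fun m ⟨s, ⟨hs, _⟩, hm⟩ => by have := hB s hs _ hm; omega⟩

theorem EastReach.neg_le_ellT {n : ℕ} {s : Finset ℤ} (h : EastReach n s) {y : ℤ} (hy : y ∈ s) :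
    -y ≤ ellT n s.card := by
  have hy1 := h.le_neg_one hy
  have hmem : (-y).toNat ∈ {m : ℕ | ∃ t : Finset ℤ, Vnk n s.card t ∧ -(m : ℤ) ∈ t} :=
    ⟨s, ⟨h, rfl⟩, by rwa [Int.toNat_of_nonneg (by omega), neg_neg]⟩
  have : (-y).toNat ≤ ellT n s.card := le_csSup (bddAbove_ellT_set n s.card) hmem
  omega

theorem ellT_le_of_forall {n k B : ℕ} (h : ∀ s, Vnk n k s → ∀ y ∈ s, -y ≤ B) :
    ellT n k ≤ B :=
  csSup_le' fun m ⟨s, hs, hm⟩ => by have := h s hs _ hm; omega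

theorem ellT_mono {n k k' : ℕ} (hk : k ≤ k') (hk' : k' ≤ n) : ellT n k ≤ ellT n k' := by
  induction k', hk using Nat.le_induction with
  | base => exact le_rfl
  | succ k' _ ih =>
    refine (ih (by omega)).trans (ellT_le_of_forall fun s ⟨hs, hc⟩ y hy => ?_)
    obtain ⟨x, hx, hxs⟩ := hs.exists_insert (by omega)
    have := hxs.neg_le_ellT (mem_insert_of_mem hy)
    rwa [card_insert_of_notMem hx, hc] at this

theorem ellT_succ_one_le (N : ℕ) : ellT (N + 1) 1 ≤ ellT N N + 1 := by
  refine ellT_le_of_forall fun s ⟨hs, hc⟩ y hy => ?_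
  obtain ⟨z, rfl⟩ := card_eq_one.mp hc
  rw [mem_singleton] at hy
  subst hy
  have hy1 := hs.le_neg_one (mem_singleton_self y)
  push_cast
  rcases eq_or_lt_of_le hy1 with rfl | hy2
  · omega
  · obtain ⟨w, hw, hyw⟩ := hs.exists_reach_mem_of_singleton (by omega)
    have := hw.neg_le_ellT hyw
    have := ellT_mono hw.card_le le_rfl
    omega

theorem ellT_add_one_le (N : ℕ) : ellT N N + 1 ≤ ellT (N + 1) 1 := by
  set L := ellT N N
  obtain ⟨s, hs, hL⟩ : ∃ s, EastReach N s ∧ (L = 0 ∨ -(L : ℤ) ∈ s) := by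
    by_cases hne : {m : ℕ | ∃ s : Finset ℤ, Vnk N N s ∧ -(m : ℤ) ∈ s}.Nonempty
    · obtain ⟨s, ⟨hs, -⟩, hm⟩ := Nat.sSup_mem hne (bddAbove_ellT_set N N)
      exact ⟨s, hs, Or.inr hm⟩
    · -- only for `N = 0`; then `L = sSup ∅ = 0` and the new zero sits at `-1`
      refine ⟨∅, .refl, Or.inl ?_⟩
      simp only [L, ellT, Set.not_nonempty_iff_eq_empty.mp hne, csSup_empty]
      rfl
  set x₀ : ℤ := -(L + 1)
  have hx₀ : ∀ t, EastReach N t → x₀ ∉ t := fun t ht hx => by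
    have := ht.neg_le_ellT hx
    have := ellT_mono ht.card_le le_rfl
    omega
  have hstep : EastStep (N + 1) s (insert x₀ s) := by
    refine ⟨⟨x₀, by omega, ?_, Or.inl ⟨hx₀ s hs, rfl⟩⟩, (card_insert_le _ _).trans (by
      have := hs.card_le; omega)⟩
    rcases hL with hL | hL
    · left; omega
    · right; rwa [show x₀ + 1 = -(L : ℤ) by omega]
  have hpath : EastReach (N + 1) {x₀} :=
    ((hs.mono N.le_succ).tail hstep).trans
      (reflTransGen_eastStep_symm (hs.reflTransGen_singleton_insert hx₀) (by simp))
  have := hpath.neg_le_ellT (mem_singleton_self x₀)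
  simp only [card_singleton] at this
  omega

/-- `ℓ̃(n,k)` is nondecreasing in `k` for `0 ≤ k ≤ n`, and `ℓ̃(n,1) = ℓ̃(n-1,n-1) + 1`
for `n ≥ 1`. -/
theorem east_ellT_monotone_and_rec :
    (∀ n k k' : ℕ, k ≤ k' → k' ≤ n → ellT n k ≤ ellT n k') ∧
    (∀ n : ℕ, 1 ≤ n → ellT n 1 = ellT (n - 1) (n - 1) + 1) := by
  refine ⟨fun n k k' hk hk' => ellT_mono hk hk', fun n hn => ?_⟩
  obtain ⟨N, rfl⟩ := Nat.exists_eq_add_of_le' hn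
  rw [Nat.add_sub_cancel]
  exact le_antisymm (ellT_succ_one_le N) (ellT_add_one_le N)
end

section
/- With ℓ̃ defined via the East model reachability under at most n simultaneous zeros, the superadditivity inequality ℓ̃(n,k) ≥ Σ_{j=1}^{k} ℓ̃(n−j+1, 1) holds for all n ≥ k ≥ 1. -/
open Finset

def EastFlip (s s' : Finset ℤ) : Prop :=
  ∃ x : ℤ, x ≤ -1 ∧ (x = -1 ∨ (x + 1) ∈ s) ∧
      ((x ∉ s ∧ s' = insert x s) ∨ (x ∈ s ∧ s' = s.erase x))

lemma EastFlip.legal_of_not_iff {s s' : Finset ℤ} (h : EastFlip s s') {y : ℤ}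
    (hy : ¬(y ∈ s' ↔ y ∈ s)) : y ≤ -1 ∧ (y = -1 ∨ y + 1 ∈ s) := by
  obtain ⟨x, hx, hlegal, ⟨-, rfl⟩ | ⟨-, rfl⟩⟩ := h <;>
  · obtain rfl : y = x := by
      by_contra hne
      simp [hne] at hy
    exact ⟨hx, hlegal⟩

lemma EastFlip.sub_one_le {s s' : Finset ℤ} (h : EastFlip s s') {b c m : ℤ} (hc : c ≤ 0)
    (hmc : m ≤ c) (hm : ∀ x ∈ s ∩ Ioo b c, m ≤ x) : ∀ x ∈ s' ∩ Ioo b c, m - 1 ≤ x := by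
  intro x hx
  simp only [mem_inter, mem_Ioo] at hx hm
  by_cases hxs : x ∈ s
  · linarith [hm x ⟨hxs, hx.2⟩]
  obtain ⟨-, rfl | hx1⟩ := h.legal_of_not_iff (y := x) (by tauto)
  · omega
  · by_cases hxc : x + 1 < c
    · linarith [hm (x + 1) ⟨hx1, by omega, hxc⟩]
    · omega

lemma EastFlip.mem_iff_of_gap {s s' : Finset ℤ} (h : EastFlip s s') {v c : ℤ} (hc : c < 0)
    (hgap : ∀ y ∈ s, ¬(v < y ∧ y ≤ c)) {y : ℤ} (hvy : v ≤ y) (hyc : y < c) : y ∈ s' ↔ y ∈ s := by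
  by_contra hy
  obtain ⟨-, rfl | hy1⟩ := h.legal_of_not_iff hy
  · omega
  · exact hgap _ hy1 ⟨by omega, by omega⟩

lemma card_inter_Ioo_add_card_inter_Ioo_lt {s : Finset ℤ} {b v a : ℤ} (hv : v ∈ s)
    (hbv : b < v) (hva : v < a) : #(s ∩ Ioo b v) + #(s ∩ Ioo v a) < #(s ∩ Ioo b a) := by
  rw [← card_union_of_disjoint]
  · apply card_lt_card
    rw [ssubset_iff_of_subset]
    · exact ⟨v, by simp [hv, hbv, hva], by simp⟩
    · intro x
      simp only [mem_union, mem_inter, mem_Ioo]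
      rintro (⟨hx, h1, h2⟩ | ⟨hx, h1, h2⟩) <;> exact ⟨hx, by omega, by omega⟩
  · rw [disjoint_left]
    intro x
    simp only [mem_inter, mem_Ioo]
    omega

def IsEastPath (σ : ℕ → Finset ℤ) (t₀ T : ℕ) : Prop :=
  ∀ t ∈ Set.Ico t₀ T, EastFlip (σ t) (σ (t + 1))

lemma IsEastPath.mono {σ : ℕ → Finset ℤ} {t₀ T t₁ T₁ : ℕ} (h : IsEastPath σ t₀ T)
    (h₀ : t₀ ≤ t₁) (h₁ : T₁ ≤ T) : IsEastPath σ t₁ T₁ :=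
  fun t ht => h t ⟨h₀.trans ht.1, ht.2.trans_le h₁⟩

/-- Seen from the window `(b, a)` with `a ≤ 0`, the East dynamics is an East model in which the
site `a` may always serve as the facilitating zero. -/
def DepthBound (N : ℕ) (D : ℤ) : Prop :=
  ∀ (σ : ℕ → Finset ℤ) (t₀ T : ℕ) (b a μ : ℤ), a ≤ 0 → μ ≤ a → IsEastPath σ t₀ T →
    (∀ t ∈ Set.Icc t₀ T, #(σ t ∩ Ioo b a) ≤ N) → (∀ x ∈ σ t₀ ∩ Ioo b a, μ ≤ x) →
    ∀ t ∈ Set.Icc t₀ T, ∀ x ∈ σ t ∩ Ioo b a, μ - D ≤ x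

lemma depthBound_zero : DepthBound 0 0 := by
  intro σ t₀ T b a μ _ _ _ hbud _ t ht x hx
  have := hbud t ht
  exact absurd (card_pos.2 ⟨x, hx⟩) (by omega)

section DepthBound

variable {N : ℕ} {D : ℤ} {σ : ℕ → Finset ℤ} {t₀ T : ℕ} {b a : ℤ}

/-- A zero `v` with no zero above it in `(v, a)` is never removed: the zeros of `(v, a)` use at
most `N` of the budget, so they never reach below `a - D > c`, and the segment `[v, c)` stays
frozen because nothing in `(v, c]` can ever facilitate it. -/
lemma DepthBound.top_zero_mem (h : DepthBound N D) (hD : 0 ≤ D) {v c : ℤ} (ha : a ≤ 0)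
    (hvc : v < c) (hca : c + D < a) (hpath : IsEastPath σ t₀ T)
    (hbud : ∀ t ∈ Set.Icc t₀ T, #(σ t ∩ Ioo b a) ≤ N + 1) (hbv : b < v) (hv : v ∈ σ t₀)
    (habove : ∀ x ∈ σ t₀ ∩ Ioo v a, a ≤ x) : ∀ t ∈ Set.Icc t₀ T, v ∈ σ t := by
  suffices key : ∀ t, t₀ ≤ t → t ≤ T →
      ∀ s ∈ Set.Icc t₀ t, ∀ y, v ≤ y → y < c → (y ∈ σ s ↔ y ∈ σ t₀) from
    fun t ht => (key t ht.1 ht.2 t ⟨ht.1, le_rfl⟩ v le_rfl hvc).2 hv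
  intro t ht₀
  induction t, ht₀ using Nat.le_induction with
  | base =>
    rintro - s ⟨h₁, h₂⟩ y - -
    rw [le_antisymm h₂ h₁]
  | succ t ht₀ ih =>
    intro htT
    have ih := ih (by omega)
    have hdeep := h σ t₀ t v a a ha le_rfl (hpath.mono le_rfl (by omega))
      (fun s hs => by
        have := card_inter_Ioo_add_card_inter_Ioo_lt
          ((ih s hs v le_rfl hvc).2 hv) hbv (show v < a by omega)
        have := hbud s ⟨hs.1, hs.2.trans (by omega)⟩
        omega)
      habove t ⟨ht₀, le_rfl⟩
    have hgap : ∀ y ∈ σ t, ¬(v < y ∧ y ≤ c) := by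
      rintro y hy ⟨h₁, h₂⟩
      rcases h₂.lt_or_eq with h₂ | rfl
      · have := habove y (by simp [(ih t ⟨ht₀, le_rfl⟩ y h₁.le h₂).1 hy, h₁]; omega)
        omega
      · have := hdeep y (by simp [hy, h₁]; omega)
        omega
    rintro s ⟨h₁, h₂⟩ y hvy hyc
    rcases h₂.lt_or_eq with h₂ | rfl
    · exact ih s ⟨h₁, by omega⟩ y hvy hyc
    · rw [(hpath t ⟨ht₀, by omega⟩).mem_iff_of_gap (show c < 0 by omega) hgap hvy hyc]
      exact ih t ⟨ht₀, le_rfl⟩ y hvy hyc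

lemma DepthBound.le_of_zero_mem (h : DepthBound N D) (hD : 0 ≤ D) {v m : ℤ} (ha : a ≤ 0)
    (hpath : IsEastPath σ t₀ T) (hbud : ∀ t ∈ Set.Icc t₀ T, #(σ t ∩ Ioo b a) ≤ N + 1)
    (hbv : b < v) (hva : v < a) (hv : ∀ t ∈ Set.Icc t₀ T, v ∈ σ t) (hmv : m ≤ v)
    (hbelow : ∀ x ∈ σ t₀ ∩ Ioo b v, m ≤ x) (habove : ∀ x ∈ σ t₀ ∩ Ioo v a, a ≤ x) :
    ∀ t ∈ Set.Icc t₀ T, ∀ x ∈ σ t ∩ Ioo b a, m - D ≤ x := by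
  have hsplit := fun t ht => card_inter_Ioo_add_card_inter_Ioo_lt (hv t ht) hbv hva
  have hlow := h σ t₀ T b v m (by omega) hmv hpath
    (fun t ht => by have := hsplit t ht; have := hbud t ht; omega) hbelow
  have hhigh := h σ t₀ T v a a ha le_rfl hpath
    (fun t ht => by have := hsplit t ht; have := hbud t ht; omega) habove
  intro t ht x hx
  simp only [mem_inter, mem_Ioo] at hx
  rcases lt_trichotomy x v with hxv | rfl | hvx
  · exact hlow t ht x (by simp [hx.1, hx.2.1, hxv])
  · omega
  · linarith [hhigh t ht x (by simp [hx.1, hx.2.2, hvx])]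

/-- Once the subwindow `(b, c)` holds the whole budget `N + 1`, its highest zero `v` has nothing
above it in `(v, a)`, so it stays put and splits `(b, a)` into two windows of budget `N`. -/
lemma DepthBound.le_of_full (h : DepthBound N D) (hD : 0 ≤ D) {c m : ℤ} (ha : a ≤ 0)
    (hca : c + D < a) (hpath : IsEastPath σ t₀ T)
    (hbud : ∀ t ∈ Set.Icc t₀ T, #(σ t ∩ Ioo b a) ≤ N + 1)
    (hfull : N + 1 ≤ #(σ t₀ ∩ Ioo b c)) (hm : ∀ x ∈ σ t₀ ∩ Ioo b c, m ≤ x) :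
    ∀ t ∈ Set.Icc t₀ T, ∀ x ∈ σ t ∩ Ioo b a, m - D ≤ x := by
  intro t ht
  have hsub : σ t₀ ∩ Ioo b c ⊆ σ t₀ ∩ Ioo b a :=
    inter_subset_inter_left (Ioo_subset_Ioo_right (by omega))
  have heq := eq_of_subset_of_card_le hsub
    ((hbud t₀ ⟨le_rfl, ht.1.trans ht.2⟩).trans hfull)
  have hne : (σ t₀ ∩ Ioo b c).Nonempty := card_pos.1 (by omega)
  have hvmem := max'_mem _ hne
  set v := (σ t₀ ∩ Ioo b c).max' hne
  have hvmax : ∀ x ∈ σ t₀ ∩ Ioo b a, x ≤ v := fun x hx => le_max' _ x (heq ▸ hx)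
  obtain ⟨hv, hbv, hvc⟩ : v ∈ σ t₀ ∧ b < v ∧ v < c := by simpa using hvmem
  have habove : ∀ x ∈ σ t₀ ∩ Ioo v a, a ≤ x := by
    intro x hx
    simp only [mem_inter, mem_Ioo] at hx
    have := hvmax x (by simp [hx.1, hx.2.2]; omega)
    omega
  have hbelow : ∀ x ∈ σ t₀ ∩ Ioo b v, m ≤ x := by
    intro x hx
    simp only [mem_inter, mem_Ioo] at hx
    exact hm x (by simp [hx.1, hx.2.1]; omega)
  exact h.le_of_zero_mem hD ha hpath hbud hbv (by omega)
    (h.top_zero_mem hD ha hvc hca hpath hbud hbv hv habove) (hm v hvmem) hbelow habove t ht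

end DepthBound

/-- With `c = μ - D - 1`: as long as `(b, c)` holds at most `N` zeros, the budget-`N` bound applies
to it directly; otherwise, at the first time it holds `N + 1` zeros these lie at or above
`c - D - 1` and `DepthBound.le_of_full` takes over. Hence `D ↦ 3D + 2`. -/
theorem DepthBound.succ {N : ℕ} {D : ℤ} (h : DepthBound N D) (hD : 0 ≤ D) :
    DepthBound (N + 1) (3 * D + 2) := by
  classical
  intro σ t₀ T b a μ ha hμa hpath hbud hinit t ht x hx
  obtain ⟨ht₀, htT⟩ := id ht
  set c := μ - D - 1
  rcases le_or_gt c x with hcx | hxc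
  · omega
  have hx' : x ∈ σ t ∩ Ioo b c := by simp_all
  have hempty : σ t₀ ∩ Ioo b c = ∅ := by
    refine eq_empty_of_forall_notMem fun y hy => ?_
    simp only [mem_inter, mem_Ioo] at hy
    have := hinit y (by simp [hy.1, hy.2.1]; omega)
    omega
  by_cases hfull : ∃ t' ∈ Set.Icc t₀ t, N + 1 ≤ #(σ t' ∩ Ioo b c)
  · obtain ⟨t', ⟨⟨ht₀', ht'⟩, hfull'⟩, hmin⟩ : ∃ t', (t' ∈ Set.Icc t₀ t ∧
        N + 1 ≤ #(σ t' ∩ Ioo b c)) ∧ ∀ s < t', ¬(s ∈ Set.Icc t₀ t ∧ N + 1 ≤ #(σ s ∩ Ioo b c)) :=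
      ⟨Nat.find hfull, Nat.find_spec hfull, fun s hs => Nat.find_min hfull hs⟩
    have ht₀t' : t₀ < t' := by
      rcases ht₀'.lt_or_eq with h' | h'
      · exact h'
      · rw [← h', hempty] at hfull'
        simp at hfull'
    have hbefore : ∀ s ∈ Set.Icc t₀ (t' - 1), #(σ s ∩ Ioo b c) ≤ N := by
      rintro s ⟨hs₁, hs₂⟩
      by_contra
      exact hmin s (by omega) ⟨⟨hs₁, by omega⟩, by omega⟩
    have hprev := h σ t₀ (t' - 1) b c c (by omega) le_rfl (hpath.mono le_rfl (by omega))
      hbefore (by simp [hempty]) (t' - 1) ⟨by omega, le_rfl⟩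
    have hm := (hpath (t' - 1) ⟨by omega, by omega⟩).sub_one_le
      (show c ≤ 0 by omega) (show c - D ≤ c by omega) hprev
    rw [Nat.sub_add_cancel (by omega)] at hm
    have := h.le_of_full hD ha (show c + D < a by omega) (hpath.mono ht₀' htT)
      (fun s hs => hbud s ⟨ht₀'.trans hs.1, hs.2.trans htT⟩) hfull' hm t ⟨ht', le_rfl⟩ x hx
    omega
  · push Not at hfull
    have := h σ t₀ t b c c (by omega) le_rfl (hpath.mono le_rfl htT)
      (fun s hs => by have := hfull s hs; omega) (by simp [hempty]) t ⟨ht₀, le_rfl⟩ x hx'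
    omega

theorem depthBound (N : ℕ) : DepthBound N (3 ^ N - 1) := by
  induction N with
  | zero => simpa using depthBound_zero
  | succ N ih =>
    have h3 : (1 : ℤ) ≤ 3 ^ N := one_le_pow₀ (by norm_num)
    convert ih.succ (by linarith) using 1
    ring

lemma EastReach.exists_path {n : ℕ} {s : Finset ℤ} (h : EastReach n s) :
    ∃ (T : ℕ) (σ : ℕ → Finset ℤ), σ 0 = ∅ ∧ σ T = s ∧ IsEastPath σ 0 T ∧
      ∀ t ≤ T, #(σ t) ≤ n := by
  induction h with
  | refl => exact ⟨0, fun _ => ∅, rfl, rfl, fun t ht => absurd ht.2 (by omega), by simp⟩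
  | @tail u v _ hstep ih =>
    obtain ⟨T, σ, h0, hT, hpath, hcard⟩ := ih
    refine ⟨T + 1, fun t => if t ≤ T then σ t else v, by simp [h0], by simp, ?_, ?_⟩
    · rintro t ⟨-, ht⟩
      rcases (Nat.lt_succ_iff.1 ht).lt_or_eq with ht | rfl
      · simpa [ht.le, Nat.succ_le_of_lt ht] using hpath t ⟨Nat.zero_le _, ht⟩
      · simp only [le_refl, if_pos, Nat.not_succ_le_self, if_false, hT]
        exact hstep.1
    · intro t ht
      dsimp only
      split_ifs with htT
      · exact hcard t htT
      · exact hstep.2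

theorem EastReach.neg_pow_le {n : ℕ} {s : Finset ℤ} (h : EastReach n s) :
    ∀ x ∈ s, -(3 ^ n - 1 : ℤ) ≤ x := by
  intro x hx
  have h3 : (1 : ℤ) ≤ 3 ^ n := one_le_pow₀ (by norm_num)
  rcases le_or_gt 0 x with hx0 | hx0
  · linarith
  obtain ⟨T, σ, h0, hT, hpath, hcard⟩ := h.exists_path
  have := depthBound n σ 0 T (x - 1) 0 0 le_rfl le_rfl hpath
    (fun t ht => (card_le_card inter_subset_left).trans (hcard t ht.2)) (by simp [h0])
    T ⟨Nat.zero_le _, le_rfl⟩ x (by simp [hT, hx, hx0])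
  linarith

lemma bddAbove_depths (n k : ℕ) : BddAbove {m : ℕ | ∃ s, Vnk n k s ∧ -(m : ℤ) ∈ s} := by
  refine ⟨3 ^ n, ?_⟩
  rintro m ⟨s, ⟨hs, -⟩, hm⟩
  have := hs.neg_pow_le _ hm
  exact_mod_cast (show (m : ℤ) ≤ 3 ^ n by linarith)

lemma le_ellT {n k m : ℕ} {s : Finset ℤ} (hs : Vnk n k s) (hm : -(m : ℤ) ∈ s) : m ≤ ellT n k :=
  le_csSup (bddAbove_depths n k) ⟨s, hs, hm⟩

lemma eastReach_singleton_ellT {n : ℕ} (hn : 1 ≤ n) :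
    EastReach n {-(ellT n 1 : ℤ)} ∧ 1 ≤ ellT n 1 := by
  have hone : EastReach n {-1} :=
    .single ⟨⟨-1, le_rfl, Or.inl rfl, Or.inl ⟨by simp, by simp⟩⟩, by simpa using hn⟩
  have hsup : ellT n 1 ∈ {m : ℕ | ∃ s, Vnk n 1 s ∧ -(m : ℤ) ∈ s} :=
    Nat.sSup_mem ⟨1, {-1}, ⟨hone, rfl⟩, by simp⟩ (bddAbove_depths n 1)
  obtain ⟨s, ⟨hs, hcard⟩, hmem⟩ := hsup
  obtain ⟨y, rfl⟩ := card_eq_one.1 hcard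
  rw [mem_singleton] at hmem
  exact ⟨hmem ▸ hs, le_ellT ⟨hone, rfl⟩ (by simp)⟩

/-- Anchoring: a zero at `A` below which `t` is empty plays the role of the frozen zero at the
origin, so any path reaching `s` can be replayed shifted by `A`. -/
lemma EastReach.reflTransGen_union_image_add {m n : ℕ} {s t : Finset ℤ} (hs : EastReach m s)
    {A : ℤ} (hA : A ∈ t) (hA0 : A ≤ 0) (htA : ∀ y ∈ t, A ≤ y) (hcard : #t + m ≤ n) :
    Relation.ReflTransGen (EastStep n) t (t ∪ s.image (· + A)) := by
  induction hs with
  | refl => simpa using Relation.ReflTransGen.refl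
  | @tail u w _ hstep ih =>
    obtain ⟨⟨x, hx, hlegal, hflip⟩, hw⟩ := hstep
    have hxt : x + A ∉ t := fun h => by linarith [htA _ h]
    refine ih.tail ⟨⟨x + A, by omega, ?_, ?_⟩, ?_⟩
    · rcases hlegal with rfl | h1
      · exact Or.inr (mem_union_left _ (by simpa using hA))
      · exact Or.inr (mem_union_right _ (mem_image.2 ⟨x + 1, h1, by ring⟩))
    · rcases hflip with ⟨hxu, rfl⟩ | ⟨hxu, rfl⟩
      · refine Or.inl ⟨?_, by rw [image_insert, union_insert]⟩
        simp [hxt, hxu]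
      · refine Or.inr ⟨mem_union_right _ (mem_image_of_mem _ hxu), ?_⟩
        rw [image_erase (add_left_injective A), erase_union_distrib, erase_eq_of_notMem hxt]
    · calc #(t ∪ w.image (· + A)) ≤ #t + #w :=
            (card_union_le _ _).trans (Nat.add_le_add_left card_image_le _)
        _ ≤ n := by omega

lemma exists_eastReach_sum_ellT {n j : ℕ} (hj : 1 ≤ j) (hjn : j ≤ n) :
    ∃ t : Finset ℤ, EastReach n t ∧ #t = j ∧
      -((∑ i ∈ Icc 1 j, ellT (n - i + 1) 1 : ℕ) : ℤ) ∈ t ∧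
      ∀ y ∈ t, -((∑ i ∈ Icc 1 j, ellT (n - i + 1) 1 : ℕ) : ℤ) ≤ y := by
  induction j, hj using Nat.le_induction with
  | base =>
    obtain ⟨hreach, -⟩ := eastReach_singleton_ellT (by omega : 1 ≤ n)
    refine ⟨_, hreach, card_singleton _, ?_, ?_⟩ <;> simp [Nat.sub_add_cancel (by omega : 1 ≤ n)]
  | succ j hj ih =>
    obtain ⟨t, ht, hcard, hmem, hle⟩ := ih (by omega)
    set P := ∑ i ∈ Icc 1 j, ellT (n - i + 1) 1
    obtain ⟨hs, hL⟩ := eastReach_singleton_ellT (by omega : 1 ≤ n - (j + 1) + 1)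
    set L := ellT (n - (j + 1) + 1) 1
    have hsum : ∑ i ∈ Icc 1 (j + 1), ellT (n - i + 1) 1 = P + L :=
      sum_Icc_succ_top (by omega) _
    have hnew : -((P + L : ℕ) : ℤ) ∉ t := fun h => by have := hle _ h; push_cast at this; omega
    refine ⟨insert (-((P + L : ℕ) : ℤ)) t, ?_, ?_, ?_, ?_⟩
    · have := hs.reflTransGen_union_image_add (n := n) hmem (by omega) hle
        (by rw [hcard]; omega)
      rw [image_singleton, union_comm, ← insert_eq] at this
      exact ht.trans (by convert this using 3; push_cast; ring)
    · rw [card_insert_of_notMem hnew, hcard]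
    · rw [hsum]; exact mem_insert_self _ _
    · rw [hsum]
      intro y hy
      rcases mem_insert.1 hy with rfl | hy
      · exact le_rfl
      · have := hle y hy; push_cast; omega

/-- Superadditivity: `ℓ̃(n,k) ≥ Σ_{j=1}^{k} ℓ̃(n-j+1, 1)` for all `n ≥ k ≥ 1`. -/
theorem east_ellT_superadditive (n k : ℕ) (hk : 1 ≤ k) (hkn : k ≤ n) :
    ∑ j ∈ Finset.Icc 1 k, ellT (n - j + 1) 1 ≤ ellT n k := by
  obtain ⟨t, ht, hcard, hmem, -⟩ := exists_eastReach_sum_ellT hk hkn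
  exact le_ellT ⟨ht, hcard⟩ hmem
end
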